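/- Let f : A → B be a linear map between finite-dimensional vector spaces over a field F, let k be an ordered basis of ker f, and let b = (b_1,…,b_s) be an ordered basis of im f. If b̃^(1) and b̃^(2) are two liftings of b (i.e. tuples in A with f(b̃^(r)_j) = b_j for all j), then (k, b̃^(1)) and (k, b̃^(2)) are ordered bases of A and [(k, b̃^(1))/(k, b̃^(2))] = 1. -/

import Mathlib

/-!
The lifting `t` defines a section of `f` onto its image, which splits `A ≅ ker f × im f`;
transporting the product basis `(k, b)` along this splitting gives the basis `(k, t)`.
Two liftings differ by vectors of `ker f`, so in the basis `(k, t₂)` the transition matrix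
is block unitriangular `[[1, *], [0, 1]]` and has determinant `1`.
-/

open LinearMap Module

theorem Module.Basis.span_range_coe {R M ι : Type*} [Semiring R] [AddCommMonoid M]
    [Module R M] {p : Submodule R M} (k : Basis ι R p) :
    Submodule.span R (Set.range fun i => (k i : M)) = p := by
  change Submodule.span R (Set.range (p.subtype ∘ k)) = p
  rw [Set.range_comp, Submodule.span_image, k.span_eq, Submodule.map_top, Submodule.range_subtype]

theorem Module.Basis.exists_sumElim_ker_lift {R M N ι κ : Type*} [Ring R]
    [AddCommGroup M] [Module R M] [AddCommGroup N] [Module R N]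
    (f : M →ₗ[R] N) (k : Basis ι R (ker f)) (b : Basis κ R (range f))
    (t : κ → M) (ht : ∀ j, f (t j) = b j) :
    ∃ B : Basis (ι ⊕ κ) R M, ⇑B = Sum.elim (fun i => (k i : M)) t := by
  let l : range f →ₗ[R] M := Finsupp.linearCombination R t ∘ₗ b.repr
  have hl : f.rangeRestrict ∘ₗ l = .id := b.ext fun j => Subtype.ext (by simp [l, ht])
  have hexact : Function.Exact (ker f).subtype f.rangeRestrict := fun x => by
    simp [Subtype.ext_iff]
  let split := hexact.splitSurjectiveEquiv (ker f).injective_subtype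
  let E := (split ⟨l, hl⟩).1.symm
  have hEinl : E ∘ₗ inl R (ker f) (range f) = (ker f).subtype := by
    exact (split ⟨l, hl⟩).2.1.symm
  have hEinr : E ∘ₗ inr R (ker f) (range f) = l := by
    exact congrArg Subtype.val (split.symm_apply_apply ⟨l, hl⟩)
  refine ⟨(k.prod b).map E, funext ?_⟩
  rintro (i | j)
  · simpa using LinearMap.congr_fun hEinl (k i)
  · simpa [l] using LinearMap.congr_fun hEinr (b j)

theorem Module.Basis.det_toMatrix_eq_one_of_sub_mem_span {R M ι κ : Type*} [CommRing R]
    [AddCommGroup M] [Module R M] [Fintype ι] [Fintype κ] [DecidableEq ι] [DecidableEq κ]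
    (u : ι → M) (t₁ t₂ : κ → M) (h : ∀ j, t₁ j - t₂ j ∈ Submodule.span R (Set.range u))
    (B₁ B₂ : Basis (ι ⊕ κ) R M) (h₁ : ⇑B₁ = Sum.elim u t₁) (h₂ : ⇑B₂ = Sum.elim u t₂) :
    (B₂.toMatrix B₁).det = 1 := by
  have hrange : Set.range u = B₂ '' Set.range Sum.inl := by
    rw [← Set.range_comp, h₂, Sum.elim_comp_inl]
  have hcoord : ∀ j j', B₂.repr (t₁ j - t₂ j) (Sum.inr j') = 0 := fun j j' =>
    Finsupp.notMem_support_iff.mp fun hmem => by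
      obtain ⟨i, hi⟩ := B₂.mem_span_image.mp (hrange ▸ h j) hmem
      exact Sum.inl_ne_inr hi
  have hu : ∀ i, u i = B₂ (Sum.inl i) := by simp [h₂]
  have ht₂ : ∀ j, t₂ j = B₂ (Sum.inr j) := by simp [h₂]
  have h₁₁ : (B₂.toMatrix B₁).toBlocks₁₁ = 1 := by
    ext i i'
    simp [Matrix.toBlocks₁₁, Basis.toMatrix_apply, h₁, hu, Finsupp.single_apply,
      Matrix.one_apply, eq_comm]
  have h₂₁ : (B₂.toMatrix B₁).toBlocks₂₁ = 0 := by
    ext j i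
    simp [Matrix.toBlocks₂₁, Basis.toMatrix_apply, h₁, hu]
  have h₂₂ : (B₂.toMatrix B₁).toBlocks₂₂ = 1 := by
    ext j j'
    have hrepr := hcoord j' j
    rw [map_sub, Finsupp.sub_apply, sub_eq_zero] at hrepr
    simp [Matrix.toBlocks₂₂, Basis.toMatrix_apply, h₁, hrepr, ht₂, Finsupp.single_apply,
      Matrix.one_apply, eq_comm]
  rw [← (B₂.toMatrix B₁).fromBlocks_toBlocks, h₁₁, h₂₁, h₂₂, Matrix.det_fromBlocks_zero₂₁]
  simp

theorem torsion_lifting_lemma_general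
    {F A B : Type} [Field F]
    [AddCommGroup A] [Module F A]
    [AddCommGroup B] [Module F B]
    (f : A →ₗ[F] B) {r s : ℕ}
    (k : Module.Basis (Fin r) F (LinearMap.ker f))
    (b : Module.Basis (Fin s) F (LinearMap.range f))
    (t₁ t₂ : Fin s → A)
    (ht₁ : ∀ j, f (t₁ j) = (b j : B))
    (ht₂ : ∀ j, f (t₂ j) = (b j : B)) :
    (∃ B₁ : Module.Basis (Fin r ⊕ Fin s) F A,
        ⇑B₁ = Sum.elim (fun j => (k j : A)) t₁) ∧
    (∃ B₂ : Module.Basis (Fin r ⊕ Fin s) F A,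
        ⇑B₂ = Sum.elim (fun j => (k j : A)) t₂) ∧
    (∀ B₁ B₂ : Module.Basis (Fin r ⊕ Fin s) F A,
        ⇑B₁ = Sum.elim (fun j => (k j : A)) t₁ →
        ⇑B₂ = Sum.elim (fun j => (k j : A)) t₂ →
        (B₂.toMatrix ⇑B₁).det = 1) := by
  refine ⟨k.exists_sumElim_ker_lift f b t₁ ht₁, k.exists_sumElim_ker_lift f b t₂ ht₂,
    Basis.det_toMatrix_eq_one_of_sub_mem_span _ t₁ t₂ fun j => ?_⟩
  rw [k.span_range_coe, mem_ker, map_sub, ht₁, ht₂, sub_self]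

/-- Lemma 2.4. Let `f : A → B` be a linear map between
finite-dimensional vector spaces over a field `F`, let `k` be an ordered basis of
`ker f` and `b` an ordered basis of `im f`.  If `t₁` and `t₂` are two liftings of `b`
(i.e. `f (tᵣ j) = b j` for all `j`), then the concatenations `(k, t₁)` and `(k, t₂)`
are ordered bases of `A`, and the determinant of the transition matrix
`[(k, t₁)/(k, t₂)]` equals `1`. -/
theorem torsion_lifting_lemma
    {F A B : Type} [Field F]
    [AddCommGroup A] [Module F A] [FiniteDimensional F A]
    [AddCommGroup B] [Module F B] [FiniteDimensional F B]
    (f : A →ₗ[F] B) {r s : ℕ}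
    (k : Module.Basis (Fin r) F (LinearMap.ker f))
    (b : Module.Basis (Fin s) F (LinearMap.range f))
    (t₁ t₂ : Fin s → A)
    (ht₁ : ∀ j, f (t₁ j) = (b j : B))
    (ht₂ : ∀ j, f (t₂ j) = (b j : B)) :
    (∃ B₁ : Module.Basis (Fin r ⊕ Fin s) F A,
        ⇑B₁ = Sum.elim (fun j => (k j : A)) t₁) ∧
    (∃ B₂ : Module.Basis (Fin r ⊕ Fin s) F A,
        ⇑B₂ = Sum.elim (fun j => (k j : A)) t₂) ∧
    (∀ B₁ B₂ : Module.Basis (Fin r ⊕ Fin s) F A,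
        ⇑B₁ = Sum.elim (fun j => (k j : A)) t₁ →
        ⇑B₂ = Sum.elim (fun j => (k j : A)) t₂ →
        (B₂.toMatrix ⇑B₁).det = 1) :=
  torsion_lifting_lemma_general f k b t₁ t₂ ht₁ ht₂
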